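/- Let L ≥ 0, b, d ∈ ℕ, and let f_1,…,f_d be L-Lipschitz continuous pdfs on ℝ each supported on [0,1]. Then there exist histograms h_1,…,h_d ∈ ℋ_{1,b} such that ‖ ∏_{i=1}^d f_i − ∏_{i=1}^d h_i ‖_1 ≤ dL/(√12 · b), where ∏ denotes the product function on ℝ^d and ‖·‖_1 is the L¹ norm with respect to Lebesgue measure; equivalently, min_{h ∈ ℋ^1_{d,b}} ‖ ∏_{i=1}^d f_i − h ‖_1 ≤ dL/(√12 · b). -/

import Mathlib

open MeasureTheory Filter Finset

noncomputable section

/-- Membership in `ℋ_{1,b}`: a pdf on `[0,1]` that is constant on each of the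
`b` equal-width bins `[(i-1)/b, i/b)`, i.e. a non-negative step function with respect
to this partition integrating to one. -/
def IsHist1 (b : ℕ) (h : ℝ → ℝ) : Prop :=
  ∃ c : Fin b → ℝ, (∀ i, 0 ≤ c i) ∧
    (∀ x, h x = ∑ i : Fin b,
      c i * Set.indicator (Set.Ico ((i.val : ℝ) / b) (((i.val : ℝ) + 1) / b)) 1 x) ∧
    ∫ x, h x = 1

/-! Replace each `fᵢ` by the histogram `hᵢ` of its bin averages. On a bin of width `w` the mean
minimises the quadratic deviation, so the Lipschitz bound gives `∫ (fᵢ - hᵢ)² ≤ L² w³ / 12` there,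
and Cauchy–Schwarz turns this into `∫ |fᵢ - hᵢ| ≤ L w² / √12`; summing over the `b` bins of width
`1 / b` gives `L / (√12 b)`. Since all `fᵢ` and `hᵢ` are pdfs, telescoping the difference of the
products and integrating with Fubini bounds the L¹ error of the product by the sum of the
one-dimensional errors. -/

open Set
open scoped NNReal Function

section Moments

variable {α : Type*} [MeasurableSpace α] {μ : Measure α} {f : α → ℝ}

lemma average_nonneg (hf : ∀ x, 0 ≤ f x) : 0 ≤ ⨍ x, f x ∂μ := by
  rw [average_eq]
  exact smul_nonneg (inv_nonneg.2 measureReal_nonneg) (integral_nonneg hf)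

variable [IsFiniteMeasure μ]

lemma integral_sub_const_sq (hf : Integrable f μ) (hf2 : Integrable (fun x => f x ^ 2) μ)
    (c : ℝ) :
    ∫ x, (f x - c) ^ 2 ∂μ = ∫ x, f x ^ 2 ∂μ - 2 * c * ∫ x, f x ∂μ + c ^ 2 * μ.real univ := by
  have hexpand : (fun x => (f x - c) ^ 2) = fun x => f x ^ 2 - 2 * c * f x + c ^ 2 := by
    ext x; ring
  rw [hexpand, integral_add (f := fun x => f x ^ 2 - 2 * c * f x) (hf2.sub (hf.const_mul _))
      (integrable_const _), integral_sub (f := fun x => f x ^ 2) hf2 (hf.const_mul _),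
    integral_const_mul, integral_const, smul_eq_mul]
  ring

/-- Cauchy–Schwarz for `|f|` and `1`, read off the discriminant of `c ↦ ∫ (|f| - c)²`. -/
lemma sq_integral_abs_le (hf : Integrable f μ) (hf2 : Integrable (fun x => f x ^ 2) μ) :
    (∫ x, |f x| ∂μ) ^ 2 ≤ μ.real univ * ∫ x, f x ^ 2 ∂μ := by
  have hquad : ∀ c : ℝ,
      0 ≤ μ.real univ * (c * c) + (-2 * ∫ x, |f x| ∂μ) * c + ∫ x, f x ^ 2 ∂μ := by
    intro c
    have h := integral_sub_const_sq hf.abs (by simpa only [sq_abs] using hf2) c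
    simp only [sq_abs] at h
    nlinarith [integral_nonneg (μ := μ) (f := fun x => (|f x| - c) ^ 2) fun x => sq_nonneg _]
  have := discrim_le_zero hquad
  rw [discrim] at this
  nlinarith

lemma integral_sub_average_sq_le (hf : Integrable f μ) (hf2 : Integrable (fun x => f x ^ 2) μ)
    (c : ℝ) : ∫ x, (f x - ⨍ y, f y ∂μ) ^ 2 ∂μ ≤ ∫ x, (f x - c) ^ 2 ∂μ := by
  rcases eq_zero_or_neZero μ with rfl | hμ
  · simp
  rw [integral_sub_const_sq hf hf2, integral_sub_const_sq hf hf2, average_eq, smul_eq_mul]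
  have hm : 0 < μ.real univ := measureReal_univ_pos
  have hmean : (μ.real univ)⁻¹ * (∫ x, f x ∂μ) * μ.real univ = ∫ x, f x ∂μ := by
    field_simp
  generalize (μ.real univ)⁻¹ * ∫ x, f x ∂μ = a at hmean ⊢
  -- the two sides differ by `μ.real univ * (c - a) ^ 2`
  linear_combination mul_nonneg hm.le (sq_nonneg (c - a)) + (2 * a - 2 * c) * hmean

end Moments

section Lipschitz

variable {K : ℝ≥0} {g : ℝ → ℝ} {a c : ℝ}

lemma Continuous.integrableOn_Ico {E : Type*} [NormedAddCommGroup E] {F : ℝ → E}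
    (hF : Continuous F) : IntegrableOn F (Ico a c) :=
  hF.integrableOn_Icc.mono_set Ico_subset_Icc_self

lemma LipschitzWith.setIntegral_Ico_sub_midpoint_sq_le (hg : LipschitzWith K g) (hac : a ≤ c) :
    ∫ x in Ico a c, (g x - g ((a + c) / 2)) ^ 2 ≤ K ^ 2 * (c - a) ^ 3 / 12 := by
  have hpoint : ∀ x, (g x - g ((a + c) / 2)) ^ 2 ≤ K ^ 2 * (x - (a + c) / 2) ^ 2 := fun x => by
    have := hg.dist_le_mul x ((a + c) / 2)
    rw [Real.dist_eq, Real.dist_eq] at this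
    rw [← mul_pow, sq_le_sq, abs_mul, NNReal.abs_eq]
    exact this
  have hcont := hg.continuous
  calc ∫ x in Ico a c, (g x - g ((a + c) / 2)) ^ 2
      ≤ ∫ x in Ico a c, K ^ 2 * (x - (a + c) / 2) ^ 2 :=
        setIntegral_mono (Continuous.integrableOn_Ico (by fun_prop))
          (Continuous.integrableOn_Ico (by fun_prop)) hpoint
    _ = ∫ x in a..c, K ^ 2 * (x - (a + c) / 2) ^ 2 := by
        rw [intervalIntegral.integral_of_le hac, integral_Ico_eq_integral_Ioc]
    _ = K ^ 2 * (c - a) ^ 3 / 12 := by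
        rw [intervalIntegral.integral_const_mul,
          intervalIntegral.integral_comp_sub_right (fun x => x ^ 2), integral_pow]
        ring

lemma LipschitzWith.setIntegral_Ico_abs_sub_setAverage_le (hg : LipschitzWith K g)
    (hac : a ≤ c) :
    ∫ x in Ico a c, |g x - ⨍ y in Ico a c, g y| ≤ K * (c - a) ^ 2 / Real.sqrt 12 := by
  have hcont := hg.continuous
  have hvol : (volume.restrict (Ico a c)).real univ = c - a := by
    rw [measureReal_restrict_apply_univ, Real.volume_real_Ico_of_le hac]
  set avg := ⨍ y in Ico a c, g y
  have hsq : (∫ x in Ico a c, |g x - avg|) ^ 2 ≤ (K * (c - a) ^ 2 / Real.sqrt 12) ^ 2 :=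
    calc (∫ x in Ico a c, |g x - avg|) ^ 2
        ≤ (c - a) * ∫ x in Ico a c, (g x - avg) ^ 2 :=
          hvol ▸ sq_integral_abs_le (Continuous.integrableOn_Ico (by fun_prop))
            (Continuous.integrableOn_Ico (by fun_prop))
      _ ≤ (c - a) * ∫ x in Ico a c, (g x - g ((a + c) / 2)) ^ 2 :=
          mul_le_mul_of_nonneg_left (integral_sub_average_sq_le hcont.integrableOn_Ico
            (Continuous.integrableOn_Ico (by fun_prop)) _) (sub_nonneg.2 hac)
      _ ≤ (c - a) * (K ^ 2 * (c - a) ^ 3 / 12) :=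
          mul_le_mul_of_nonneg_left (hg.setIntegral_Ico_sub_midpoint_sq_le hac) (sub_nonneg.2 hac)
      _ = (K * (c - a) ^ 2 / Real.sqrt 12) ^ 2 := by
          rw [div_pow, Real.sq_sqrt (by norm_num)]
          ring
  exact (pow_le_pow_iff_left₀ (integral_nonneg fun _ => abs_nonneg _) (by positivity)
    two_ne_zero).1 hsq

end Lipschitz

section Histogram

def histBin (b k : ℕ) : Set ℝ := Ico (k / b) ((k + 1) / b)

def binHistogram (b : ℕ) (g : ℝ → ℝ) (x : ℝ) : ℝ :=
  ∑ i : Fin b, (⨍ y in histBin b i, g y) * (histBin b i).indicator 1 x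

variable {b : ℕ} {g : ℝ → ℝ}

lemma natCast_div_le_succ_div (b k : ℕ) : (k : ℝ) / b ≤ (k + 1) / b := by
  gcongr
  linarith

lemma measurableSet_histBin (b k : ℕ) : MeasurableSet (histBin b k) := measurableSet_Ico

lemma pairwise_disjoint_histBin (b : ℕ) : Pairwise (Disjoint on histBin b) := by
  show Pairwise (Disjoint on fun k : ℕ => Ico ((k : ℝ) / b) ((k + 1) / b))
  simpa only [Order.succ_eq_add_one, Nat.cast_add, Nat.cast_one] using
    (monotone_nat_of_le_succ (f := fun k : ℕ => (k : ℝ) / b) fun k => by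
      simpa using natCast_div_le_succ_div b k).pairwise_disjoint_on_Ico_succ

lemma histBin_subset_Icc {k : ℕ} (hk : k < b) : histBin b k ⊆ Set.Icc (0 : ℝ) 1 := by
  have hb : (0 : ℝ) < b := by exact_mod_cast (Nat.zero_le k).trans_lt hk
  refine Ico_subset_Icc_self.trans (Icc_subset_Icc (by positivity) ?_)
  rw [div_le_one hb]
  exact_mod_cast hk

lemma binHistogram_eq_setAverage {i : Fin b} {x : ℝ} (hx : x ∈ histBin b i) :
    binHistogram b g x = ⨍ y in histBin b i, g y := by
  rw [binHistogram, Finset.sum_eq_single i]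
  · simp [indicator_of_mem hx]
  · intro j _ hji
    have hxj := (pairwise_disjoint_histBin b (Fin.val_injective.ne hji)).notMem_of_mem_right hx
    rw [indicator_of_notMem hxj, mul_zero]
  · simp

lemma binHistogram_eq_zero {x : ℝ} (hx : x ∉ Set.Icc (0 : ℝ) 1) : binHistogram b g x = 0 :=
  Finset.sum_eq_zero fun i _ => by
    rw [indicator_of_notMem fun hxi => hx (histBin_subset_Icc i.isLt hxi), mul_zero]

lemma binHistogram_nonneg (hg : ∀ x, 0 ≤ g x) (x : ℝ) : 0 ≤ binHistogram b g x :=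
  Finset.sum_nonneg fun _ _ =>
    mul_nonneg (average_nonneg hg) (indicator_nonneg (fun _ _ => zero_le_one) x)

lemma integrable_binHistogram (b : ℕ) (g : ℝ → ℝ) : Integrable (binHistogram b g) :=
  integrable_finsetSum _ fun _ _ =>
    ((integrable_indicator_iff measurableSet_Ico).2
      (integrableOn_const measure_Ico_lt_top.ne)).const_mul _

lemma integral_eq_sum_setIntegral_histBin (hb : b ≠ 0) {F : ℝ → ℝ} (hF : Integrable F)
    (hF0 : ∀ x ∉ Set.Icc (0 : ℝ) 1, F x = 0) :
    ∫ x, F x = ∑ i : Fin b, ∫ x in histBin b i, F x := by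
  have hb' : (b : ℝ) ≠ 0 := Nat.cast_ne_zero.2 hb
  calc ∫ x, F x = ∫ x in (0 : ℝ)..1, F x := by
        rw [intervalIntegral.integral_of_le zero_le_one, ← integral_Icc_eq_integral_Ioc,
          setIntegral_eq_integral_of_forall_compl_eq_zero hF0]
    _ = ∑ k ∈ range b, ∫ x in ((k : ℕ) : ℝ) / b..((k + 1 : ℕ) : ℝ) / b, F x := by
        rw [intervalIntegral.sum_integral_adjacent_intervals fun _ _ => hF.intervalIntegrable]
        simp [hb']
    _ = ∑ i : Fin b, ∫ x in histBin b i, F x := by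
        rw [Fin.sum_univ_eq_sum_range (fun k => ∫ x in histBin b k, F x)]
        refine Finset.sum_congr rfl fun k _ => ?_
        rw [intervalIntegral.integral_of_le (by simpa using natCast_div_le_succ_div b k),
          histBin, integral_Ico_eq_integral_Ioc, Nat.cast_succ]

lemma volume_real_histBin (b k : ℕ) : volume.real (histBin b k) = 1 / b := by
  rw [histBin, Real.volume_real_Ico_of_le (natCast_div_le_succ_div b k)]
  ring

lemma setIntegral_histBin_binHistogram (i : Fin b) :
    ∫ x in histBin b i, binHistogram b g x = ∫ x in histBin b i, g x := by
  have hb : (b : ℝ) ≠ 0 := by exact_mod_cast (Nat.zero_le _).trans_lt i.isLt |>.ne'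
  rw [setIntegral_congr_fun (measurableSet_histBin _ _) fun _ hx => binHistogram_eq_setAverage hx,
    setIntegral_const, setAverage_eq, smul_inv_smul₀ (by simp [volume_real_histBin, hb])]

lemma integral_binHistogram (hb : b ≠ 0) (hg : Integrable g)
    (hg0 : ∀ x ∉ Set.Icc (0 : ℝ) 1, g x = 0) :
    ∫ x, binHistogram b g x = ∫ x, g x := by
  rw [integral_eq_sum_setIntegral_histBin hb (integrable_binHistogram b g)
      fun x hx => binHistogram_eq_zero hx, integral_eq_sum_setIntegral_histBin hb hg hg0]
  exact Finset.sum_congr rfl fun i _ => setIntegral_histBin_binHistogram i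

lemma isHist1_binHistogram (hb : b ≠ 0) (hg : Integrable g) (hg_nonneg : ∀ x, 0 ≤ g x)
    (hg_one : ∫ x, g x = 1) (hg0 : ∀ x ∉ Set.Icc (0 : ℝ) 1, g x = 0) :
    IsHist1 b (binHistogram b g) :=
  ⟨fun i => ⨍ y in histBin b i, g y, fun _ => average_nonneg hg_nonneg, fun _ => rfl,
    (integral_binHistogram hb hg hg0).trans hg_one⟩

lemma LipschitzWith.integral_abs_sub_binHistogram_le {K : ℝ≥0} (hg : LipschitzWith K g)
    (hg0 : ∀ x ∉ Set.Icc (0 : ℝ) 1, g x = 0) (hb : b ≠ 0) :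
    ∫ x, |g x - binHistogram b g x| ≤ K / (Real.sqrt 12 * b) := by
  have hgi : Integrable g :=
    hg.continuous.integrable_of_hasCompactSupport (HasCompactSupport.intro isCompact_Icc hg0)
  rw [integral_eq_sum_setIntegral_histBin (F := fun x => |g x - binHistogram b g x|) hb
    (hgi.sub (integrable_binHistogram b g)).abs
    fun x hx => by simp [hg0 x hx, binHistogram_eq_zero hx]]
  calc ∑ i : Fin b, ∫ x in histBin b i, |g x - binHistogram b g x|
      = ∑ i : Fin b, ∫ x in histBin b i, |g x - ⨍ y in histBin b i, g y| :=
        Finset.sum_congr rfl fun _ _ => setIntegral_congr_fun (measurableSet_histBin _ _)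
          fun _ hx => by rw [binHistogram_eq_setAverage hx]
    _ ≤ ∑ _i : Fin b, K * (1 / b) ^ 2 / Real.sqrt 12 :=
        Finset.sum_le_sum fun i _ => by
          refine (hg.setIntegral_Ico_abs_sub_setAverage_le
            (natCast_div_le_succ_div b i)).trans_eq ?_
          ring
    _ = K / (Real.sqrt 12 * b) := by
        have hb' : (b : ℝ) ≠ 0 := Nat.cast_ne_zero.2 hb
        simp only [Finset.sum_const, Finset.card_univ, Fintype.card_fin, nsmul_eq_mul]
        field_simp

end Histogram

section Product

variable {ι : Type*} [Fintype ι] [LinearOrder ι]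

lemma abs_prod_sub_prod_le {a b : ι → ℝ} (ha : ∀ i, 0 ≤ a i) (hb : ∀ i, 0 ≤ b i) :
    |∏ i, a i - ∏ i, b i| ≤
      ∑ k, ∏ i, if i < k then a i else if i = k then |a i - b i| else b i := by
  have htelescope : ∏ i, a i - ∏ i, b i =
      ∑ k, (a k - b k) * (∏ i with i < k, a i) * ∏ i with k < i, b i := by
    have := prod_add_ordered univ b fun i => a i - b i
    simp only [add_sub_cancel] at this
    rw [this, add_sub_cancel_left]
  have hsplit : ∀ k, (∏ i, if i < k then a i else if i = k then |a i - b i| else b i) =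
      |a k - b k| * (∏ i with i < k, a i) * ∏ i with k < i, b i := by
    intro k
    rw [prod_ite, prod_ite, filter_filter, filter_filter]
    have hk : univ.filter (fun i => ¬i < k ∧ i = k) = {k} := by
      ext i
      simp only [Finset.mem_filter, Finset.mem_univ, true_and, Finset.mem_singleton]
      constructor
      · exact fun h => h.2
      · rintro rfl; exact ⟨lt_irrefl _, rfl⟩
    have hgt : univ.filter (fun i => ¬i < k ∧ ¬i = k) = univ.filter (k < ·) := by
      ext i
      simp only [Finset.mem_filter, Finset.mem_univ, true_and, not_lt]
      exact ⟨fun h => lt_of_le_of_ne h.1 (Ne.symm h.2), fun h => ⟨h.le, h.ne'⟩⟩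
    rw [hk, hgt, Finset.prod_singleton]
    ring
  rw [htelescope]
  refine (abs_sum_le_sum_abs _ _).trans (sum_le_sum fun k _ => ?_)
  rw [hsplit, abs_mul, abs_mul, abs_of_nonneg (prod_nonneg fun i _ => ha i),
    abs_of_nonneg (prod_nonneg fun i _ => hb i)]

variable {E : ι → Type*} [∀ i, MeasurableSpace (E i)] {μ : ∀ i, Measure (E i)}
  [∀ i, SigmaFinite (μ i)]

lemma integral_abs_prod_sub_prod_le {f h : ∀ i, E i → ℝ} (hf_nonneg : ∀ i x, 0 ≤ f i x)
    (hh_nonneg : ∀ i x, 0 ≤ h i x) (hf : ∀ i, Integrable (f i) (μ i))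
    (hh : ∀ i, Integrable (h i) (μ i)) (hf_one : ∀ i, ∫ x, f i x ∂μ i = 1)
    (hh_one : ∀ i, ∫ x, h i x ∂μ i = 1) :
    ∫ x, |∏ i, f i (x i) - ∏ i, h i (x i)| ∂Measure.pi μ ≤ ∑ i, ∫ x, |f i x - h i x| ∂μ i := by
  set F : ι → ∀ i, E i → ℝ := fun k i y =>
    if i < k then f i y else if i = k then |f i y - h i y| else h i y
  have hF : ∀ k i, Integrable (F k i) (μ i) := by
    intro k i
    simp only [F]
    split_ifs
    exacts [hf i, ((hf i).sub (hh i)).abs, hh i]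
  have hF_one : ∀ k i, i ≠ k → ∫ y, F k i y ∂μ i = 1 := by
    intro k i hik
    simp only [F, if_neg hik]
    split_ifs
    exacts [hf_one i, hh_one i]
  calc ∫ x, |∏ i, f i (x i) - ∏ i, h i (x i)| ∂Measure.pi μ
      ≤ ∫ x, ∑ k, ∏ i, F k i (x i) ∂Measure.pi μ :=
        integral_mono_of_nonneg (ae_of_all _ fun _ => abs_nonneg _)
          (integrable_finsetSum _ fun k _ => Integrable.fintype_prod_dep (hF k))
          (ae_of_all _ fun _ => abs_prod_sub_prod_le (fun i => hf_nonneg i _) (hh_nonneg · _))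
    _ = ∑ k, ∏ i, ∫ y, F k i y ∂μ i := by
        rw [integral_finsetSum _ fun k _ => Integrable.fintype_prod_dep (hF k)]
        exact sum_congr rfl fun k _ => integral_fintype_prod_eq_prod (F k)
    _ = ∑ k, ∫ y, F k k y ∂μ k :=
        sum_congr rfl fun k _ => prod_eq_single k (fun i _ => hF_one k i) (by simp)
    _ = ∑ k, ∫ y, |f k y - h k y| ∂μ k := by simp [F]

end Product

theorem rank_one_histogram_approx_general
    (d b : ℕ) (hb : 1 ≤ b) (L : ℝ) (hL : 0 ≤ L)
    (f : Fin d → ℝ → ℝ)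
    (hf : ∀ i, (∀ x, 0 ≤ f i x) ∧ (∫ x, f i x = 1) ∧
      (∀ x, x ∉ Set.Icc (0 : ℝ) 1 → f i x = 0) ∧
      (∀ x y, |f i x - f i y| ≤ L * |x - y|)) :
    ∃ h : Fin d → ℝ → ℝ, (∀ i, IsHist1 b (h i)) ∧
      ∫ x : Fin d → ℝ, |(∏ i, f i (x i)) - ∏ i, h i (x i)|
        ≤ d * L / (Real.sqrt 12 * b) := by
  simp only [forall_and] at hf
  obtain ⟨hf_nonneg, hf_one, hf_supp, hf_lip⟩ := hf
  have hb0 : b ≠ 0 := Nat.one_le_iff_ne_zero.1 hb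
  have hlip : ∀ i, LipschitzWith (Real.toNNReal L) (f i) := fun i =>
    LipschitzWith.of_dist_le_mul fun x y => by
      simpa only [Real.dist_eq, Real.coe_toNNReal _ hL] using hf_lip i x y
  have hint : ∀ i, Integrable (f i) := fun i =>
    (hlip i).continuous.integrable_of_hasCompactSupport
      (HasCompactSupport.intro isCompact_Icc (hf_supp i))
  refine ⟨fun i => binHistogram b (f i),
    fun i => isHist1_binHistogram hb0 (hint i) (hf_nonneg i) (hf_one i) (hf_supp i), ?_⟩
  calc ∫ x : Fin d → ℝ, |(∏ i, f i (x i)) - ∏ i, binHistogram b (f i) (x i)|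
      ≤ ∑ i, ∫ y, |f i y - binHistogram b (f i) y| :=
        integral_abs_prod_sub_prod_le hf_nonneg (fun i => binHistogram_nonneg (hf_nonneg i))
          hint (fun i => integrable_binHistogram b (f i)) hf_one
          fun i => (integral_binHistogram hb0 (hint i) (hf_supp i)).trans (hf_one i)
    _ ≤ ∑ _i : Fin d, L / (Real.sqrt 12 * b) := sum_le_sum fun i _ => by
        simpa only [Real.coe_toNNReal _ hL] using
          (hlip i).integral_abs_sub_binHistogram_le (hf_supp i) hb0
    _ = d * L / (Real.sqrt 12 * b) := by
        rw [sum_const, card_univ, Fintype.card_fin, nsmul_eq_mul, mul_div_assoc]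

/-- **Lemma 9.** Rank-one histogram approximation of a product of `L`-Lipschitz pdfs
supported on `[0,1]`:  `min_{h ∈ ℋ¹_{d,b}} ‖∏ᵢ fᵢ − h‖₁ ≤ dL/(√12 b)`. -/
theorem rank_one_histogram_approx
    (d b : ℕ) (hd : 1 ≤ d) (hb : 1 ≤ b) (L : ℝ) (hL : 0 ≤ L)
    (f : Fin d → ℝ → ℝ)
    (hf : ∀ i, (∀ x, 0 ≤ f i x) ∧ (∫ x, f i x = 1) ∧
      (∀ x, x ∉ Set.Icc (0 : ℝ) 1 → f i x = 0) ∧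
      (∀ x y, |f i x - f i y| ≤ L * |x - y|)) :
    ∃ h : Fin d → ℝ → ℝ, (∀ i, IsHist1 b (h i)) ∧
      ∫ x : Fin d → ℝ, |(∏ i, f i (x i)) - ∏ i, h i (x i)|
        ≤ d * L / (Real.sqrt 12 * b) :=
  rank_one_histogram_approx_general d b hb L hL f hf
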